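/- Let He_n denote the n-th probabilists' Hermite polynomial, defined by the Rodrigues-type formula He_n(x) = (−1)^n · exp(x²/2) · (d^n/dx^n) exp(−x²/2). Then for all natural numbers m ≠ n, the Hermite polynomials are orthogonal with respect to the standard Gaussian weight: ∫_ℝ He_m(x) · He_n(x) · exp(−x²/2) dx = 0. -/

import Mathlib

open MeasureTheory

/-- The `n`-th probabilists' Hermite polynomial via the Rodrigues-type formula
`He_n(x) = (−1)^n · exp(x²/2) · (d^n/dx^n) exp(−x²/2)` (Eq. 5). -/
noncomputable def He (n : ℕ) (x : ℝ) : ℝ :=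
  (-1 : ℝ) ^ n * Real.exp (x ^ 2 / 2) *
    iteratedDeriv n (fun y : ℝ => Real.exp (-y ^ 2 / 2)) x

/-!
Write `g(x) = exp(-x²/2)`. Since `(He_n g)' = -He_{n+1} g` and every polynomial times `g` is
integrable, integrating by parts `n` times gives `∫ p He_n g = ∫ p⁽ⁿ⁾ g` for every real
polynomial `p`. For `deg p < n` the right-hand side vanishes; take `p = He_m` with `m < n`.
-/

open Polynomial

namespace Polynomial

theorem integrable_eval_mul_exp_neg_mul_sq {b : ℝ} (hb : 0 < b) (p : ℝ[X]) :
    Integrable fun x : ℝ => p.eval x * Real.exp (-b * x ^ 2) := by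
  induction p using Polynomial.induction_on' with
  | add p q hp hq => simpa only [eval_add, add_mul] using hp.fun_add hq
  | monomial k a =>
    have hk : Integrable fun x : ℝ => x ^ k * Real.exp (-b * x ^ 2) := by
      simpa only [Real.rpow_natCast] using
        integrable_rpow_mul_exp_neg_mul_sq hb (s := k) (by linarith [k.cast_nonneg (α := ℝ)])
    simpa only [eval_monomial, mul_assoc] using hk.const_mul a

theorem integrable_eval_mul_aeval_hermite_mul_gaussian (p : ℝ[X]) (n : ℕ) :
    Integrable fun x : ℝ => p.eval x * (aeval x (hermite n) * Real.exp (-(x ^ 2 / 2))) := by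
  simpa [← eval_map_algebraMap, mul_assoc, neg_div, div_eq_inv_mul] using
    integrable_eval_mul_exp_neg_mul_sq (b := 1 / 2) (by norm_num)
      (p * (hermite n).map (algebraMap ℤ ℝ))

theorem hasDerivAt_aeval_hermite_mul_gaussian (n : ℕ) (x : ℝ) :
    HasDerivAt (fun y : ℝ => aeval y (hermite n) * Real.exp (-(y ^ 2 / 2)))
      (-(aeval x (hermite (n + 1)) * Real.exp (-(x ^ 2 / 2)))) x := by
  have hg : HasDerivAt (fun y : ℝ => Real.exp (-(y ^ 2 / 2)))
      (-x * Real.exp (-(x ^ 2 / 2))) x := by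
    simpa [mul_comm] using ((hasDerivAt_pow 2 x).div_const 2).neg.exp
  refine (((hermite n).hasDerivAt_aeval x).mul hg).congr_deriv ?_
  rw [hermite_succ, map_sub, map_mul, aeval_X]
  ring

theorem integral_eval_mul_aeval_hermite_mul_gaussian (p : ℝ[X]) (n : ℕ) :
    ∫ x : ℝ, p.eval x * (aeval x (hermite n) * Real.exp (-(x ^ 2 / 2))) =
      ∫ x : ℝ, (derivative^[n] p).eval x * Real.exp (-(x ^ 2 / 2)) := by
  induction n generalizing p with
  | zero => simp
  | succ n ih =>
    have ibp := integral_mul_deriv_eq_deriv_mul_of_integrable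
      (fun x _ => p.hasDerivAt x) (fun x _ => hasDerivAt_aeval_hermite_mul_gaussian n x)
      (by simpa only [Pi.mul_def, mul_neg] using
        (integrable_eval_mul_aeval_hermite_mul_gaussian p (n + 1)).fun_neg)
      (integrable_eval_mul_aeval_hermite_mul_gaussian (derivative p) n)
      (integrable_eval_mul_aeval_hermite_mul_gaussian p n)
    simp only [mul_neg, integral_neg, neg_inj] at ibp
    rw [ibp, ih, ← Function.iterate_succ_apply]

theorem integral_eval_mul_aeval_hermite_mul_gaussian_of_natDegree_lt {p : ℝ[X]} {n : ℕ}
    (hp : p.natDegree < n) :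
    ∫ x : ℝ, p.eval x * (aeval x (hermite n) * Real.exp (-(x ^ 2 / 2))) = 0 := by
  rw [integral_eval_mul_aeval_hermite_mul_gaussian, iterate_derivative_eq_zero hp]
  simp

end Polynomial

theorem He_eq_aeval_hermite (n : ℕ) (x : ℝ) : He n x = aeval x (hermite n) := by
  rw [hermite_eq_deriv_gaussian', He, iteratedDeriv_eq_iterate]
  simp_rw [neg_div]
  ring

theorem integral_He_mul_He_mul_gaussian_of_lt {m n : ℕ} (h : m < n) :
    ∫ x : ℝ, He m x * He n x * Real.exp (-x ^ 2 / 2) = 0 := by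
  simp_rw [He_eq_aeval_hermite, neg_div, mul_assoc, ← eval_map_algebraMap (hermite m)]
  apply integral_eval_mul_aeval_hermite_mul_gaussian_of_natDegree_lt
  rwa [(hermite_monic m).natDegree_map, natDegree_hermite]

/-- Orthogonality of the probabilists' Hermite polynomials with respect to the
standard Gaussian weight: for `m ≠ n`, `∫ He_m He_n e^{−x²/2} dx = 0`. -/
theorem hermite_orthogonal_gaussian
    (m n : ℕ) (hmn : m ≠ n) :
    ∫ x : ℝ, He m x * He n x * Real.exp (-x ^ 2 / 2) = 0 := by
  rcases hmn.lt_or_gt with h | h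
  · exact integral_He_mul_He_mul_gaussian_of_lt h
  · simpa only [mul_comm (He n _)] using integral_He_mul_He_mul_gaussian_of_lt h
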